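/- arXiv:2209.07946 — 3 statements merged into one kernel-verified Lean document; each statement's English description precedes it below -/
import Mathlib

section
/- Let g : U × X → X be a measurable driven system between Polish spaces with a well-defined Foias operator P_g : P(U) × P_1(X) → P_1(X). Fix θ ∈ P(U) and 0 < c < 1, and suppose g is a (θ, c)-stochastic contraction, i.e., ∫_U d_X(g(u,x), g(u,y)) dθ(u) ≤ c · d_X(x,y) for all x, y ∈ X. Then P_g(θ, ·) is a c-contraction with respect to the Wasserstein-1 distance: W(P_g(θ, μ₁), P_g(θ, μ₂)) ≤ c · W(μ₁, μ₂) for all μ₁, μ₂ ∈ P_1(X). -/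
/-!
Synchronous coupling: given a coupling `π` of `μ₁` and `μ₂`, draw `(x, y) ∼ π` and one `u ∼ θ`
independently and take `(g u x, g u y)`. This couples `P_g(θ, μ₁)` with `P_g(θ, μ₂)`, and by the
stochastic contraction its expected distance is at most `c` times that of `π`. Taking the infimum
over `π` gives the bound.
-/

open MeasureTheory ENNReal

/-- The Wasserstein-1 distance: infimum over couplings of the expected distance. -/
noncomputable def W1 {Y : Type*} [PseudoEMetricSpace Y] [MeasurableSpace Y]
    (μ ν : Measure Y) : ℝ≥0∞ :=
  ⨅ (π : Measure (Y × Y)) (_ : π.map Prod.fst = μ ∧ π.map Prod.snd = ν),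
    ∫⁻ p, edist p.1 p.2 ∂π

section Wasserstein

variable {Y : Type*} [PseudoEMetricSpace Y] [MeasurableSpace Y]

theorem W1_le_lintegral_edist {μ ν : Measure Y} {π : Measure (Y × Y)}
    (h₁ : π.map Prod.fst = μ) (h₂ : π.map Prod.snd = ν) :
    W1 μ ν ≤ ∫⁻ p, edist p.1 p.2 ∂π :=
  iInf₂_le π ⟨h₁, h₂⟩

theorem W1_le_mul_W1_of_forall_coupling {μ₁ μ₂ ν₁ ν₂ : Measure Y} {c : NNReal} (hc : c ≠ 0)
    (h : ∀ π : Measure (Y × Y), π.map Prod.fst = μ₁ → π.map Prod.snd = μ₂ →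
      W1 ν₁ ν₂ ≤ c * ∫⁻ p, edist p.1 p.2 ∂π) :
    W1 ν₁ ν₂ ≤ c * W1 μ₁ μ₂ := by
  have hc₀ : (c : ℝ≥0∞) ≠ 0 := coe_ne_zero.mpr hc
  rw [W1.eq_1 μ₁ μ₂, mul_iInf_of_ne hc₀ coe_ne_top]
  refine le_iInf fun π => ?_
  rw [mul_iInf_of_ne hc₀ coe_ne_top]
  exact le_iInf fun ⟨h₁, h₂⟩ => h π h₁ h₂

end Wasserstein

section Foias

variable {U X : Type*} [MeasurableSpace U] [MeasurableSpace X]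

/-- The Foias operator `P_g(θ, μ)`. -/
noncomputable def foiasOperator (g : U → X → X) (θ : Measure U) (μ : Measure X) : Measure X :=
  (θ.prod μ).map (Function.uncurry g)

def syncPair (g : U → X → X) (p : (X × X) × U) : X × X :=
  (g p.2 p.1.1, g p.2 p.1.2)

noncomputable def syncCoupling (g : U → X → X) (θ : Measure U) (π : Measure (X × X)) :
    Measure (X × X) :=
  (π.prod θ).map (syncPair g)

variable {g : U → X → X} {θ : Measure U} {π : Measure (X × X)}

theorem measurable_syncPair (hg : Measurable (Function.uncurry g)) : Measurable (syncPair g) :=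
  (hg.comp (measurable_snd.prodMk (measurable_fst.comp measurable_fst))).prodMk
    (hg.comp (measurable_snd.prodMk (measurable_snd.comp measurable_fst)))

theorem foiasOperator_map {Z : Type*} [MeasurableSpace Z] [SFinite θ] {ν : Measure Z} [SFinite ν]
    (hg : Measurable (Function.uncurry g)) {f : Z → X} (hf : Measurable f) :
    foiasOperator g θ (ν.map f) = (ν.prod θ).map fun q => g q.2 (f q.1) := by
  rw [foiasOperator, ← Measure.map_id (μ := θ), Measure.map_prod_map θ ν measurable_id hf,
    Measure.map_map hg (measurable_id.prodMap hf), Measure.map_id, ← Measure.prod_swap,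
    Measure.map_map (hg.comp (measurable_id.prodMap hf)) measurable_swap]
  rfl

theorem map_fst_syncCoupling [SFinite θ] [SFinite π] (hg : Measurable (Function.uncurry g)) :
    (syncCoupling g θ π).map Prod.fst = foiasOperator g θ (π.map Prod.fst) := by
  rw [foiasOperator_map hg measurable_fst, syncCoupling,
    Measure.map_map measurable_fst (measurable_syncPair hg)]
  rfl

theorem map_snd_syncCoupling [SFinite θ] [SFinite π] (hg : Measurable (Function.uncurry g)) :
    (syncCoupling g θ π).map Prod.snd = foiasOperator g θ (π.map Prod.snd) := by
  rw [foiasOperator_map hg measurable_snd, syncCoupling,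
    Measure.map_map measurable_snd (measurable_syncPair hg)]
  rfl

theorem lintegral_edist_syncCoupling_le [PseudoEMetricSpace X] {c : ℝ≥0∞} (hc : c ≠ ∞)
    (hcontr : ∀ x y : X, ∫⁻ u, edist (g u x) (g u y) ∂θ ≤ c * edist x y) :
    ∫⁻ p, edist p.1 p.2 ∂syncCoupling g θ π ≤ c * ∫⁻ p, edist p.1 p.2 ∂π :=
  calc ∫⁻ p, edist p.1 p.2 ∂syncCoupling g θ π
      ≤ ∫⁻ q, edist (g q.2 q.1.1) (g q.2 q.1.2) ∂π.prod θ :=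
        lintegral_map_le _ _
    _ ≤ ∫⁻ z, ∫⁻ u, edist (g u z.1) (g u z.2) ∂θ ∂π := lintegral_prod_le _
    _ ≤ ∫⁻ z, c * edist z.1 z.2 ∂π := lintegral_mono fun z => hcontr z.1 z.2
    _ = c * ∫⁻ z, edist z.1 z.2 ∂π := lintegral_const_mul' _ _ hc

end Foias

theorem stmt_6_general {U X : Type*}
    [MeasurableSpace U]
    [MeasurableSpace X] [MetricSpace X]
    (g : U → X → X) (hg : Measurable (Function.uncurry g))
    (θ : Measure U) [IsProbabilityMeasure θ]
    (c : NNReal) (hc0 : 0 < c)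
    (hcontr : ∀ x y : X, ∫⁻ u, edist (g u x) (g u y) ∂θ ≤ c * edist x y)
    (μ₁ μ₂ : Measure X) [IsProbabilityMeasure μ₁] :
    W1 ((θ.prod μ₁).map (Function.uncurry g)) ((θ.prod μ₂).map (Function.uncurry g))
      ≤ c * W1 μ₁ μ₂ := by
  refine W1_le_mul_W1_of_forall_coupling hc0.ne' fun π h₁ h₂ => ?_
  have : IsFiniteMeasure (π.map Prod.fst) := h₁ ▸ inferInstance
  have : IsFiniteMeasure π := Measure.isFiniteMeasure_of_map measurable_fst.aemeasurable
  calc W1 (foiasOperator g θ μ₁) (foiasOperator g θ μ₂)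
      ≤ ∫⁻ p, edist p.1 p.2 ∂syncCoupling g θ π := W1_le_lintegral_edist
        (by rw [map_fst_syncCoupling hg, h₁]) (by rw [map_snd_syncCoupling hg, h₂])
    _ ≤ c * ∫⁻ p, edist p.1 p.2 ∂π := lintegral_edist_syncCoupling_le coe_ne_top hcontr

theorem stmt_6 {U X : Type*}
    [MeasurableSpace U] [MetricSpace U] [BorelSpace U] [PolishSpace U]
    [MeasurableSpace X] [MetricSpace X] [BorelSpace X] [PolishSpace X]
    (g : U → X → X) (hg : Measurable (Function.uncurry g))
    (θ : Measure U) [IsProbabilityMeasure θ]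
    (c : NNReal) (hc0 : 0 < c) (hc1 : c < 1)
    (hcontr : ∀ x y : X, ∫⁻ u, edist (g u x) (g u y) ∂θ ≤ c * edist x y)
    (hwd : ∀ μ : Measure X, IsProbabilityMeasure μ →
      (∃ x₀ : X, ∫⁻ x, edist x₀ x ∂μ < ⊤) →
      ∃ x₀ : X, ∫⁻ x, edist x₀ x ∂((θ.prod μ).map (Function.uncurry g)) < ⊤)
    (μ₁ μ₂ : Measure X) [IsProbabilityMeasure μ₁] [IsProbabilityMeasure μ₂]
    (h₁ : ∃ x₀ : X, ∫⁻ x, edist x₀ x ∂μ₁ < ⊤)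
    (h₂ : ∃ x₀ : X, ∫⁻ x, edist x₀ x ∂μ₂ < ⊤) :
    W1 ((θ.prod μ₁).map (Function.uncurry g)) ((θ.prod μ₂).map (Function.uncurry g))
      ≤ c * W1 μ₁ μ₂ :=
  stmt_6_general g hg θ c hc0 hcontr μ₁ μ₂
end

section
/- Let g : U × X → X be a driven system, u ∈ U^ℤ a bi-infinite input, and n ∈ ℤ. Then the nested intersection X_n(u) = ⋂_{m<n} φ_u(n, m, X) equals the set of all x ∈ X such that x = x_n for some bi-infinite solution {x_k}_{k∈ℤ} of g compatible with input u. -/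
/-- The two-parameter semigroup of a driven system: `phi g u n j x = φ_u(n, n-j, x)`. -/
def phi {U X : Type*} (g : U → X → X) (u : ℤ → U) (n : ℤ) : ℕ → X → X
  | 0 => id
  | (j+1) => fun x => phi g u n j (g (u (n - (j+1))) x)

lemma phi_succ_left {U X : Type*} (g : U → X → X) (u : ℤ → U) :
    ∀ (k : ℕ) (m : ℤ) (y : X), phi g u m (k+1) y = g (u (m-1)) (phi g u (m-1) k y) := by
  intro k
  induction k with
  | zero => intro m y; simp [phi]
  | succ k ih =>
    intro m y
    have h1 : phi g u m (k+2) y = phi g u m (k+1) (g (u (m - (k+2))) y) := rfl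
    rw [h1, ih]
    have h2 : phi g u (m-1) (k+1) y = phi g u (m-1) k (g (u ((m-1) - (k+1))) y) := rfl
    rw [h2]
    congr 3
    ring

lemma phi_continuous {U X : Type*} [TopologicalSpace U] [TopologicalSpace X]
    (g : U → X → X) (hg : Continuous (Function.uncurry g)) (u : ℤ → U) (m : ℤ) (j : ℕ) :
    Continuous (phi g u m j) := by
  induction j with
  | zero => exact continuous_id
  | succ j ih =>
    show Continuous fun x => phi g u m j (g (u (m - (j+1))) x)
    exact ih.comp (hg.comp (continuous_const.prodMk continuous_id))

lemma phi_sol {U X : Type*} (g : U → X → X) (u : ℤ → U) (n : ℤ) (xs : ℤ → X)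
    (hxs : ∀ k : ℤ, xs (k+1) = g (u k) (xs k)) :
    ∀ j : ℕ, phi g u n j (xs (n - j)) = xs n := by
  intro j
  induction j with
  | zero => simp [phi]
  | succ j ih =>
    show phi g u n j (g (u (n - (j+1))) (xs (n - (j+1)))) = xs n
    rw [← hxs (n - (j+1))]
    have : n - (j+1) + 1 = n - j := by ring
    rw [this, ih]

theorem stmt_11 {U X : Type*} [TopologicalSpace U] [MetricSpace X] [CompactSpace X]
    (g : U → X → X) (hg : Continuous (Function.uncurry g))
    (u : ℤ → U) (n : ℤ) :
    (⋂ j : ℕ, phi g u n (j+1) '' Set.univ)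
      = {x : X | ∃ xs : ℤ → X, (∀ k : ℤ, xs (k+1) = g (u k) (xs k)) ∧ xs n = x} := by
  ext x
  simp only [Set.mem_iInter, Set.mem_setOf_eq]
  constructor
  · intro hx
    -- choose preimages
    have hy' : ∀ j : ℕ, ∃ y : X, phi g u n (j+1) y = x := by
      intro j
      obtain ⟨y, -, hy⟩ := hx j
      exact ⟨y, hy⟩
    choose y hy using hy'
    -- partial orbits
    set s : ℕ → ℕ → X := fun j i => phi g u (n - i) (j + 1 - i) (y j) with hs
    have hrel : ∀ i j : ℕ, i ≤ j → s j i = g (u (n - i - 1)) (s j (i+1)) := by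
      intro i j hij
      have h1 : j + 1 - i = (j - i) + 1 := by omega
      have h2 : j + 1 - (i+1) = j - i := by omega
      simp only [hs, h1, h2]
      rw [phi_succ_left]
      congr 2
      push_cast; ring
    have hzero : ∀ j : ℕ, s j 0 = x := by
      intro j
      simp only [hs]
      have : n - (0:ℕ) = n := by simp
      rw [this]
      exact hy j
    -- extract a convergent subsequence in ℕ → X
    obtain ⟨L, φ, hφ, hL⟩ := SeqCompactSpace.tendsto_subseq s
    have hLi : ∀ i : ℕ, Filter.Tendsto (fun k => s (φ k) i) Filter.atTop (nhds (L i)) :=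
      fun i => ((continuous_apply i).continuousAt.tendsto).comp hL
    have hL0 : L 0 = x := by
      have : Filter.Tendsto (fun _ : ℕ => x) Filter.atTop (nhds (L 0)) := by
        have := hLi 0
        simpa [hzero] using this
      exact tendsto_nhds_unique this tendsto_const_nhds
    have hLrel : ∀ i : ℕ, L i = g (u (n - i - 1)) (L (i+1)) := by
      intro i
      have hcg : Continuous fun z : X => g (u (n - i - 1)) z :=
        hg.comp (continuous_const.prodMk continuous_id)
      have h1 : Filter.Tendsto (fun k => g (u (n - i - 1)) (s (φ k) (i+1)))
          Filter.atTop (nhds (g (u (n - i - 1)) (L (i+1)))) :=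
        (hcg.continuousAt.tendsto).comp (hLi (i+1))
      have h2 : Filter.Tendsto (fun k => s (φ k) i) Filter.atTop
          (nhds (g (u (n - i - 1)) (L (i+1)))) := by
        apply h1.congr'
        filter_upwards [Filter.eventually_ge_atTop i] with k hk
        exact (hrel i (φ k) (le_trans hk (hφ.id_le k))).symm
      exact tendsto_nhds_unique (hLi i) h2
    -- build the bi-infinite solution
    let fwd : ℕ → X := fun m => Nat.rec (L 0) (fun m v => g (u (n + m)) v) m
    let xs : ℤ → X := fun k => if k ≤ n then L (n - k).toNat else fwd (k - n).toNat
    refine ⟨xs, ?_, ?_⟩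
    · intro k
      by_cases h1 : k + 1 ≤ n
      · have h2 : k ≤ n := by omega
        simp only [xs, if_pos h1, if_pos h2]
        have hi : (n - k).toNat = (n - (k+1)).toNat + 1 := by omega
        rw [hi]
        have := hLrel (n - (k+1)).toNat
        rw [this]
        congr 2
        omega
      · by_cases h2 : k ≤ n
        · -- k = n
          simp only [xs, if_neg h1, if_pos h2]
          have h3 : (k + 1 - n).toNat = 1 := by omega
          have h4 : (n - k).toNat = 0 := by omega
          rw [h3, h4]
          show g (u (n + ((0:ℕ):ℤ))) (L 0) = g (u k) (L 0)
          congr 2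
          push_cast
          omega
        · simp only [xs, if_neg h1, if_neg h2]
          have h3 : (k + 1 - n).toNat = (k - n).toNat + 1 := by omega
          rw [h3]
          show g (u (n + ((k - n).toNat : ℤ))) (fwd (k - n).toNat)
            = g (u k) (fwd (k - n).toNat)
          congr 2
          omega
    · simp only [xs, if_pos le_rfl]
      have : (n - n).toNat = 0 := by omega
      rw [this, hL0]
  · rintro ⟨xs, hxs, rfl⟩
    intro j
    exact ⟨xs (n - (j+1)), Set.mem_univ _, by
      have := phi_sol g u n xs hxs (j+1)
      simpa using this⟩
end

section
/- Let g : U × X → X be a driven system and G : U^{ℤ⁻} × X^{ℤ⁻} → X^{ℤ⁻} its extension to left-infinite sequence space, G(u, x) = (…, g(u_{−2}, x_{−2}), g(u_{−1}, x_{−1})). Suppose both g and G admit at least one solution for every input. Then g has the unique solution property if and only if G has the unique solution property. -/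
theorem stmt_13 {U X : Type*} (g : U → X → X)
    (hg_ex : ∀ u : ℤ → U, ∃ x : ℤ → X, ∀ n : ℤ, x (n+1) = g (u n) (x n))
    (hG_ex : ∀ u : ℤ → ℕ → U, ∃ x : ℤ → ℕ → X,
        ∀ n : ℤ, x (n+1) = fun i => g (u n i) (x n i)) :
    (∀ u : ℤ → U, ∃! x : ℤ → X, ∀ n : ℤ, x (n+1) = g (u n) (x n)) ↔
    (∀ u : ℤ → ℕ → U, ∃! x : ℤ → ℕ → X,
        ∀ n : ℤ, x (n+1) = fun i => g (u n i) (x n i)) := by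
  constructor
  · intro h u
    obtain ⟨x, hx⟩ := hG_ex u
    refine ⟨x, hx, ?_⟩
    intro y hy
    funext n i
    have hu := h (fun n => u n i)
    obtain ⟨z, hz, huniq⟩ := hu
    have h1 : (fun n => x n i) = z := huniq _ (fun n => congrFun (hx n) i)
    have h2 : (fun n => y n i) = z := huniq _ (fun n => congrFun (hy n) i)
    exact congrFun (h2.trans h1.symm) n
  · intro h u
    obtain ⟨x, hx⟩ := hg_ex u
    refine ⟨x, hx, ?_⟩
    intro y hy
    obtain ⟨z, hz, huniq⟩ := h (fun n _ => u n)
    have h1 : (fun n (_ : ℕ) => x n) = z := huniq _ (fun n => funext fun i => hx n)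
    have h2 : (fun n (_ : ℕ) => y n) = z := huniq _ (fun n => funext fun i => hy n)
    funext n
    exact congrFun (congrFun (h2.trans h1.symm) n) 0
end
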